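/- Let (ξ_j) be an i.i.d. sequence of non-negative real random variables, let S_m := Σ_{j=1}^m ξ_j, and let (N_n) be an increasing sequence of positive integer-valued random variables such that N_n/n converges almost surely to a constant q > 0. Set Ŝ_n := S_{N_n}. Suppose there is a random variable X and α > 0 such that n^{-α} Ŝ_n → X in distribution. Then m^{-α} S_m → q^{-α} X in distribution. -/

import Mathlib

open Filter MeasureTheory ProbabilityTheory Set Topology


/-- A co-countable set meets every nonempty open interval. -/
lemma aux_dense_of_compl_countable {D : Set ℝ} (hD : Dᶜ.Countable) {a b : ℝ} (hab : a < b) :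
    ∃ x, x ∈ D ∧ x ∈ Ioo a b := by
  by_contra h
  push_neg at h
  have hsub : Ioo a b ⊆ Dᶜ := fun x hx => by
    by_contra hx'
    exact h x (notMem_compl_iff.mp hx') hx
  have h0 : (volume : Measure ℝ) (Ioo a b) = 0 :=
    (hD.mono hsub).measure_zero _
  rw [Real.volume_Ioo] at h0
  exact absurd h0 (by simp [sub_pos.mpr hab, ne_of_gt])

lemma aux_liminf_add_const (f : ℕ → ENNReal) (c : ENNReal) :
    Filter.liminf (fun m => f m + c) Filter.atTop = Filter.liminf f Filter.atTop + c := by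
  rw [liminf_eq_iSup_iInf_of_nat, liminf_eq_iSup_iInf_of_nat, ENNReal.iSup_add]
  congr 1
  ext n
  rw [ENNReal.iInf_add]
  congr 1
  ext i
  rw [ENNReal.iInf_add]

lemma aux_scale {m n : ℝ} (hm : 0 < m) (hn : 0 < n) (α : ℝ) (s : ℝ) :
    n ^ (-α) * s = (m / n) ^ α * (m ^ (-α) * s) := by
  rw [Real.div_rpow hm.le hn.le, Real.rpow_neg hm.le, Real.rpow_neg hn.le]
  have h1 : m ^ α ≠ 0 := (Real.rpow_pos_of_pos hm α).ne'
  have h2 : n ^ α ≠ 0 := (Real.rpow_pos_of_pos hn α).ne'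
  field_simp

lemma aux_floor_ratio {c : ℝ} (hc : 0 < c) :
    Tendsto (fun m : ℕ => (⌊c * m⌋₊ : ℝ) / m) atTop (nhds c) ∧
      Tendsto (fun m : ℕ => ⌊c * (m : ℝ)⌋₊) atTop atTop := by
  have hlo : ∀ m : ℕ, c * m - 1 < (⌊c * (m:ℝ)⌋₊ : ℝ) := fun m => Nat.sub_one_lt_floor _
  have hhi : ∀ m : ℕ, (⌊c * (m:ℝ)⌋₊ : ℝ) ≤ c * m := fun m =>
    Nat.floor_le (by positivity)
  constructor
  · have h1 : Tendsto (fun m : ℕ => (c * m - 1) / m) atTop (nhds c) := by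
      have : Tendsto (fun m : ℕ => c - 1 / m) atTop (nhds (c - 0)) :=
        tendsto_const_nhds.sub (tendsto_one_div_atTop_nhds_zero_nat)
      rw [sub_zero] at this
      apply this.congr'
      filter_upwards [eventually_ge_atTop 1] with m hm
      have : (m:ℝ) ≠ 0 := Nat.cast_ne_zero.mpr (by omega)
      field_simp
    have h2 : Tendsto (fun m : ℕ => c * m / m) atTop (nhds c) := by
      apply tendsto_const_nhds.congr'
      filter_upwards [eventually_ge_atTop 1] with m hm
      have : (m:ℝ) ≠ 0 := Nat.cast_ne_zero.mpr (by omega)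
      field_simp
    refine tendsto_of_tendsto_of_tendsto_of_le_of_le' h1 h2 ?_ ?_
    · filter_upwards [eventually_ge_atTop 1] with m hm
      have hmpos : (0:ℝ) < m := by exact_mod_cast Nat.pos_of_ne_zero (by omega)
      gcongr
      exact (hlo m).le
    · filter_upwards [eventually_ge_atTop 1] with m hm
      have hmpos : (0:ℝ) < m := by exact_mod_cast Nat.pos_of_ne_zero (by omega)
      gcongr
      exact hhi m
  · rw [← tendsto_natCast_atTop_iff (R := ℝ)]
    apply tendsto_atTop_mono' atTop (by
      filter_upwards with m
      exact (hlo m).le)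
    have hcm : Tendsto (fun m : ℕ => c * (m:ℝ)) atTop atTop :=
      Tendsto.const_mul_atTop hc tendsto_natCast_atTop_atTop
    simpa [sub_eq_add_neg] using tendsto_atTop_add_const_right atTop (-1 : ℝ) hcm

lemma aux_Ioc_tendsto {ν : ProbabilityMeasure ℝ} {νs : ℕ → ProbabilityMeasure ℝ} {D : Set ℝ}
    (hcdf : ∀ x ∈ D, Tendsto (fun m => (νs m : Measure ℝ) (Iic x)) atTop
      (nhds ((ν : Measure ℝ) (Iic x))))
    {u v : ℝ} (hu : u ∈ D) (hv : v ∈ D) (huv : u ≤ v) :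
    Tendsto (fun m => (νs m : Measure ℝ) (Ioc u v)) atTop (nhds ((ν : Measure ℝ) (Ioc u v))) := by
  have key : ∀ (P : Measure ℝ) [IsFiniteMeasure P], P (Ioc u v) = P (Iic v) - P (Iic u) := by
    intro P _
    rw [← Iic_sdiff_Iic, measure_diff (Iic_subset_Iic.mpr huv)
      measurableSet_Iic.nullMeasurableSet (measure_ne_top _ _)]
  simp_rw [key]
  exact ENNReal.Tendsto.sub (hcdf v hv) (hcdf u hu) (Or.inr (measure_ne_top _ _))

lemma aux_weak_of_cdf {ν : ProbabilityMeasure ℝ} {νs : ℕ → ProbabilityMeasure ℝ} {D : Set ℝ}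
    (hD : Dᶜ.Countable)
    (hcdf : ∀ x ∈ D, Tendsto (fun m => (νs m : Measure ℝ) (Iic x)) atTop
      (nhds ((ν : Measure ℝ) (Iic x)))) :
    Tendsto νs atTop (nhds ν) := by
  classical
  apply MeasureTheory.tendsto_of_forall_isOpen_le_liminf
  intro G hG
  have main : ∀ ε : NNReal, 0 < ε →
      (ν : Measure ℝ) G ≤ atTop.liminf (fun m => (νs m : Measure ℝ) G) + ε := by
    intro ε hε
    obtain ⟨K, hKG, hKcomp, hKlt⟩ := hG.measurableSet.exists_isCompact_lt_add
      (μ := (ν : Measure ℝ)) (measure_ne_top _ G) (ε := ε) (by exact_mod_cast hε.ne')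
    obtain ⟨r, hr, hrsub⟩ := hKcomp.exists_thickening_subset_open hG hKG
    obtain ⟨M, hM⟩ := hKcomp.isBounded.subset_closedBall 0
    rw [Real.closedBall_eq_Icc, zero_sub, zero_add] at hM
    set h := r / 4 with hh
    have hhpos : 0 < h := by positivity
    set a := -M - h with ha
    have hpick : ∀ i : ℕ, ∃ x, x ∈ D ∧ x ∈ Ioo (a + i * h) (a + i * h + h) :=
      fun i => aux_dense_of_compl_countable hD (by linarith)
    choose s hsD hsIoo using hpick
    have hsmono : ∀ i j : ℕ, i < j → s i < s j := by
      intro i j hij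
      have h1 := (hsIoo i).2
      have h2 := (hsIoo j).1
      have hij' : (i:ℝ) + 1 ≤ j := by exact_mod_cast hij
      nlinarith
    have hsle : ∀ i j : ℕ, i ≤ j → s i ≤ s j := by
      intro i j hij
      rcases eq_or_lt_of_le hij with rfl | hlt
      · exact le_rfl
      · exact (hsmono _ _ hlt).le
    have hsgap : ∀ i : ℕ, s (i+1) - s i < 2 * h := by
      intro i
      have h1 := (hsIoo i).1
      have h2 := (hsIoo (i+1)).2
      push_cast at h2
      nlinarith
    obtain ⟨n, hn⟩ := exists_nat_gt ((2*M + h)/h)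
    have hnM : M < a + n * h := by
      have := (div_lt_iff₀ hhpos).mp hn
      rw [ha]; linarith
    set t : ℕ → Set ℝ := fun i =>
      if (K ∩ Ioc (s i) (s (i+1))).Nonempty then Ioc (s i) (s (i+1)) else ∅ with ht
    have htmeas : ∀ i, MeasurableSet (t i) := by
      intro i
      rw [ht]
      by_cases hne : (K ∩ Ioc (s i) (s (i+1))).Nonempty
      · simp only [if_pos hne]; exact measurableSet_Ioc
      · simp only [if_neg hne]; exact MeasurableSet.empty
    have htsub : ∀ i, t i ⊆ Ioc (s i) (s (i+1)) := by
      intro i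
      rw [ht]
      by_cases hne : (K ∩ Ioc (s i) (s (i+1))).Nonempty
      · simp only [if_pos hne]; exact subset_rfl
      · simp only [if_neg hne]; exact empty_subset _
    set J := ⋃ i ∈ Finset.range n, t i with hJ
    have hKJ : K ⊆ J := by
      intro y hy
      have hyIcc := hM hy
      have hy1 : s 0 < y := by
        have h0 := (hsIoo 0).2
        push_cast at h0
        have := hyIcc.1
        linarith [hyIcc.1]
      have hy2 : y < s n := by
        have h1 := (hsIoo n).1
        linarith [hyIcc.2]
      have hex : ∃ j, y ≤ s j := ⟨n, hy2.le⟩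
      have hjspec : y ≤ s (Nat.find hex) := Nat.find_spec hex
      have hjne : Nat.find hex ≠ 0 := by
        intro h0
        rw [h0] at hjspec
        exact absurd hjspec (not_le.mpr hy1)
      obtain ⟨i, hi⟩ := Nat.exists_eq_succ_of_ne_zero hjne
      rw [Nat.succ_eq_add_one] at hi
      have hilt : s i < y := by
        have := Nat.find_min hex (m := i) (by omega)
        exact not_le.mp this
      have hjn : i + 1 ≤ n := by
        by_contra hcon
        push_neg at hcon
        have hni : n ≤ i := by omega
        have : s n ≤ s i := hsle _ _ hni
        linarith
      have hyIoc : y ∈ Ioc (s i) (s (i+1)) := ⟨hilt, hi ▸ hjspec⟩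
      have hti : t i = Ioc (s i) (s (i+1)) := by
        rw [ht]; exact if_pos ⟨y, hy, hyIoc⟩
      exact mem_biUnion (Finset.mem_range.mpr (by omega)) (hti ▸ hyIoc)
    have hJG : J ⊆ G := by
      intro z hz
      rw [hJ, mem_iUnion] at hz
      obtain ⟨i, hz⟩ := hz
      rw [mem_iUnion] at hz
      obtain ⟨hi, hzi⟩ := hz
      have hne : (K ∩ Ioc (s i) (s (i+1))).Nonempty := by
        by_contra hcon
        rw [ht] at hzi
        simp only [if_neg hcon] at hzi
        exact hzi
      obtain ⟨y, hyK, hyIoc⟩ := hne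
      have hzi' : z ∈ Ioc (s i) (s (i+1)) := htsub i hzi
      apply hrsub
      rw [Metric.mem_thickening_iff]
      refine ⟨y, hyK, ?_⟩
      rw [Real.dist_eq, abs_lt]
      have hg := hsgap i
      have hr4 : h = r / 4 := hh
      constructor
      · nlinarith [hzi'.1, hzi'.2, hyIoc.1, hyIoc.2]
      · nlinarith [hzi'.1, hzi'.2, hyIoc.1, hyIoc.2]
    have hdisj : (↑(Finset.range n) : Set ℕ).PairwiseDisjoint t := by
      intro i _ j _ hij
      apply Set.disjoint_of_subset (htsub i) (htsub j)
      rw [Set.Ioc_disjoint_Ioc]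
      rcases lt_or_gt_of_ne hij with hlt | hlt
      · exact le_trans (min_le_left _ _) (le_trans (hsle _ _ hlt) (le_max_right _ _))
      · exact le_trans (min_le_right _ _) (le_trans (hsle _ _ hlt) (le_max_left _ _))
    have hmeasJ : ∀ (P : Measure ℝ), P J = ∑ i ∈ Finset.range n, P (t i) := fun P =>
      measure_biUnion_finset hdisj (fun i _ => htmeas i)
    have htend_i : ∀ i ∈ Finset.range n,
        Tendsto (fun m => (νs m : Measure ℝ) (t i)) atTop (nhds ((ν : Measure ℝ) (t i))) := by
      intro i _
      rw [ht]
      by_cases hne : (K ∩ Ioc (s i) (s (i+1))).Nonempty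
      · simp only [if_pos hne]
        exact aux_Ioc_tendsto hcdf (hsD i) (hsD (i+1)) (hsle i (i+1) (by omega))
      · simp only [if_neg hne, measure_empty]
        exact tendsto_const_nhds
    have htendJ : Tendsto (fun m => (νs m : Measure ℝ) J) atTop (nhds ((ν : Measure ℝ) J)) := by
      simp_rw [hmeasJ]
      exact tendsto_finset_sum _ htend_i
    calc (ν : Measure ℝ) G ≤ (ν : Measure ℝ) K + ε := hKlt.le
      _ ≤ (ν : Measure ℝ) J + ε := add_le_add_left (measure_mono hKJ) _
      _ = atTop.liminf (fun m => (νs m : Measure ℝ) J) + ε := by rw [htendJ.liminf_eq]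
      _ ≤ atTop.liminf (fun m => (νs m : Measure ℝ) G) + ε := by
          exact add_le_add_left (liminf_le_liminf (Eventually.of_forall
            (fun m => measure_mono hJG))) _
  have main' : (ν : Measure ℝ) G ≤ atTop.liminf (fun m => (νs m : Measure ℝ) G) :=
    ENNReal.le_of_forall_pos_le_add (fun ε hε _ => main ε hε)
  have aux : (ENNReal.ofNNReal (liminf (fun i => νs i G) atTop)) =
      liminf (fun i => ((νs i G : NNReal) : ENNReal)) atTop := by
    refine Monotone.map_liminf_of_continuousAt (F := atTop) ENNReal.coe_mono (νs · G) ?_ ?_ ?_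
    · exact ENNReal.continuous_coe.continuousAt
    · exact IsBoundedUnder.isCoboundedUnder_ge ⟨1, by simp⟩
    · exact ⟨0, by simp⟩
  rw [← ENNReal.coe_le_coe, aux]
  simp only [ProbabilityMeasure.ennreal_coeFn_eq_coeFn_toMeasure]
  exact main'

lemma aux_limsup_le {Ω : Type*} [MeasurableSpace Ω] {μ : Measure Ω} [IsProbabilityMeasure μ]
    {A E B : ℕ → Set Ω} {L : ENNReal}
    (hincl : ∀ᶠ m in atTop, A m ⊆ E m ∪ (B m)ᶜ)
    (hB : Tendsto (fun m => μ (B m)ᶜ) atTop (nhds 0))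
    (hE : Tendsto (fun m => μ (E m)) atTop (nhds L)) :
    Filter.limsup (fun m => μ (A m)) atTop ≤ L := by
  have h1 : ∀ᶠ m in atTop, μ (A m) ≤ μ (E m) + μ (B m)ᶜ := by
    filter_upwards [hincl] with m hm
    exact le_trans (measure_mono hm) (measure_union_le _ _)
  calc Filter.limsup (fun m => μ (A m)) atTop
      ≤ Filter.limsup (fun m => μ (E m) + μ (B m)ᶜ) atTop := limsup_le_limsup h1
    _ = L + 0 := (hE.add hB).limsup_eq
    _ = L := add_zero L

lemma aux_liminf_ge_aux {f g : ℕ → ENNReal} (hf1 : ∀ m, f m ≤ 1)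
    (hg : Tendsto g atTop (nhds 0)) :
    Filter.liminf (fun m => f m + g m) atTop ≤ Filter.liminf f atTop := by
  apply ENNReal.le_of_forall_pos_le_add
  intro δ hδ _
  have hev : ∀ᶠ m in atTop, g m ≤ (δ : ENNReal) := by
    have : Iio (δ : ENNReal) ∈ nhds (0 : ENNReal) :=
      Iio_mem_nhds (by exact_mod_cast hδ)
    filter_upwards [hg.eventually this] with m hm
    exact hm.le
  calc Filter.liminf (fun m => f m + g m) atTop
      ≤ Filter.liminf (fun m => f m + (δ : ENNReal)) atTop := by
        exact liminf_le_liminf (by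
          filter_upwards [hev] with m hm
          exact add_le_add_right hm _)
    _ = Filter.liminf f atTop + δ := aux_liminf_add_const f δ

lemma aux_liminf_ge {Ω : Type*} [MeasurableSpace Ω] {μ : Measure Ω} [IsProbabilityMeasure μ]
    {A E C : ℕ → Set Ω} {L : ENNReal}
    (hincl : ∀ᶠ m in atTop, E m ⊆ A m ∪ (C m)ᶜ)
    (hC : Tendsto (fun m => μ (C m)ᶜ) atTop (nhds 0))
    (hE : Tendsto (fun m => μ (E m)) atTop (nhds L)) :
    L ≤ Filter.liminf (fun m => μ (A m)) atTop := by
  have h1 : ∀ᶠ m in atTop, μ (E m) ≤ μ (A m) + μ (C m)ᶜ := by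
    filter_upwards [hincl] with m hm
    exact le_trans (measure_mono hm) (measure_union_le _ _)
  calc L = Filter.liminf (fun m => μ (E m)) atTop := hE.liminf_eq.symm
    _ ≤ Filter.liminf (fun m => μ (A m) + μ (C m)ᶜ) atTop := liminf_le_liminf h1
    _ ≤ Filter.liminf (fun m => μ (A m)) atTop :=
        aux_liminf_ge_aux (fun m => prob_le_one) hC

lemma aux_measure_compl_tendsto_zero {Ω : Type*} [MeasurableSpace Ω] (μ : Measure Ω)
    [IsProbabilityMeasure μ] {B : ℕ → Set Ω} (hmeas : ∀ m, MeasurableSet (B m))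
    (hae : ∀ᵐ ω ∂μ, ∀ᶠ m in atTop, ω ∈ B m) :
    Tendsto (fun m => μ (B m)ᶜ) atTop (nhds 0) := by
  have heq : ∀ m, μ (B m)ᶜ = ∫⁻ ω, ((B m)ᶜ).indicator (1 : Ω → ENNReal) ω ∂μ := by
    intro m
    rw [lintegral_indicator_one (hmeas m).compl]
  simp_rw [heq]
  have := tendsto_lintegral_of_dominated_convergence (μ := μ)
    (F := fun m => ((B m)ᶜ).indicator (1 : Ω → ENNReal)) (f := fun _ => 0)
    (fun _ => 1)
    (fun m => (measurable_one.indicator (hmeas m).compl))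
    (fun m => Eventually.of_forall (fun ω => Set.indicator_le_self _ _ ω))
    (by simp)
    ?_
  · simpa using this
  · filter_upwards [hae] with ω hω
    apply tendsto_const_nhds.congr'
    filter_upwards [hω] with m hm
    simp [Set.indicator_of_notMem (notMem_compl_iff.mpr hm)]

lemma aux_above {ν : Measure ℝ} [IsFiniteMeasure ν] {D : Set ℝ} (hD : Dᶜ.Countable) (t : ℝ)
    {δ : ENNReal} (hδ : δ ≠ 0) :
    ∃ v, v ∈ D ∧ t < v ∧ ν (Iic v) ≤ ν (Iic t) + δ := by
  have hiInter : ⋂ k : ℕ, Iic (t + 1/((k:ℝ)+1)) = Iic t := by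
    ext z
    simp only [mem_iInter, mem_Iic]
    constructor
    · intro hz
      by_contra hcon
      push_neg at hcon
      obtain ⟨k, hk⟩ := exists_nat_one_div_lt (sub_pos.mpr hcon)
      have := hz k
      linarith [hk]
    · intro hz k
      have : (0:ℝ) < 1/((k:ℝ)+1) := by positivity
      linarith
  have htend : Tendsto (fun k : ℕ => ν (Iic (t + 1/((k:ℝ)+1)))) atTop (nhds (ν (Iic t))) := by
    have := MeasureTheory.tendsto_measure_iInter_atTop (μ := ν)
      (s := fun k : ℕ => Iic (t + 1/((k:ℝ)+1)))
      (fun k => measurableSet_Iic.nullMeasurableSet)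
      (fun i j hij => Iic_subset_Iic.mpr (by
        have : (1:ℝ)/((j:ℝ)+1) ≤ 1/((i:ℝ)+1) := by
          apply one_div_le_one_div_of_le (by positivity)
          exact_mod_cast add_le_add_left (Nat.cast_le.mpr hij) 1
        linarith))
      ⟨0, measure_ne_top _ _⟩
    rwa [hiInter] at this
  have hlt : ν (Iic t) < ν (Iic t) + δ :=
    ENNReal.lt_add_right (measure_ne_top _ _) hδ
  have hev := htend.eventually_lt_const hlt
  obtain ⟨k, hk⟩ := hev.exists
  obtain ⟨v, hvD, hvIoo⟩ := aux_dense_of_compl_countable hD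
    (show t < t + 1/((k:ℝ)+1) by
      have : (0:ℝ) < 1/((k:ℝ)+1) := by positivity
      linarith)
  exact ⟨v, hvD, hvIoo.1, le_trans (measure_mono (Iic_subset_Iic.mpr hvIoo.2.le)) hk.le⟩

lemma aux_below {ν : Measure ℝ} [IsFiniteMeasure ν] {D : Set ℝ} (hD : Dᶜ.Countable) (t : ℝ)
    (hatom : ν {t} = 0) {δ : ENNReal} (hδ : δ ≠ 0) :
    ∃ u, u ∈ D ∧ u < t ∧ ν (Iic t) ≤ ν (Iic u) + δ := by
  have hIic : ν (Iic t) = ν (Iio t) := by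
    rw [← Iio_union_right]
    refine le_antisymm ?_ (measure_mono subset_union_left)
    calc ν (Iio t ∪ {t}) ≤ ν (Iio t) + ν {t} := measure_union_le _ _
      _ = ν (Iio t) := by rw [hatom, add_zero]
  have hiUnion : ⋃ k : ℕ, Iic (t - 1/((k:ℝ)+1)) = Iio t := by
    ext z
    simp only [mem_iUnion, mem_Iic, mem_Iio]
    constructor
    · rintro ⟨k, hk⟩
      have : (0:ℝ) < 1/((k:ℝ)+1) := by positivity
      linarith
    · intro hz
      obtain ⟨k, hk⟩ := exists_nat_one_div_lt (sub_pos.mpr hz)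
      exact ⟨k, by linarith⟩
  have htend : Tendsto (fun k : ℕ => ν (Iic (t - 1/((k:ℝ)+1)))) atTop (nhds (ν (Iio t))) := by
    have := MeasureTheory.tendsto_measure_iUnion_atTop (μ := ν)
      (s := fun k : ℕ => Iic (t - 1/((k:ℝ)+1)))
      (fun i j hij => Iic_subset_Iic.mpr (by
        have : (1:ℝ)/((j:ℝ)+1) ≤ 1/((i:ℝ)+1) := by
          apply one_div_le_one_div_of_le (by positivity)
          exact_mod_cast add_le_add_left (Nat.cast_le.mpr hij) 1
        linarith))
    rwa [hiUnion] at this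
  set L := ν (Iio t) with hL
  by_cases hLδ : L ≤ δ
  · obtain ⟨u, huD, huIoo⟩ := aux_dense_of_compl_countable hD
      (show t - 1 < t by linarith)
    refine ⟨u, huD, huIoo.2, ?_⟩
    rw [hIic]
    exact le_trans hLδ le_add_self
  · push_neg at hLδ
    have hL0 : L ≠ 0 := (lt_of_le_of_lt zero_le hLδ).ne'
    have hsub : L - δ < L := ENNReal.sub_lt_self (measure_ne_top _ _) hL0 hδ
    have hev := htend.eventually (Ioi_mem_nhds hsub)
    obtain ⟨k, hk⟩ := hev.exists
    obtain ⟨u, huD, huIoo⟩ := aux_dense_of_compl_countable hD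
      (show t - 1/((k:ℝ)+1) < t by
        have : (0:ℝ) < 1/((k:ℝ)+1) := by positivity
        linarith)
    refine ⟨u, huD, huIoo.2, ?_⟩
    rw [hIic]
    have h1 : L - δ ≤ ν (Iic u) := le_trans (le_of_lt hk)
      (measure_mono (Iic_subset_Iic.mpr huIoo.1.le))
    calc L = L - δ + δ := (tsub_add_cancel_of_le hLδ.le).symm
      _ ≤ ν (Iic u) + δ := add_le_add_left h1 _

lemma aux_eps_lo {q : ℝ} (hq : 0 < q) (α x : ℝ) :
    Tendsto (fun k : ℕ => (q / (1 - 1/((k:ℝ)+2))) ^ α * x) atTop (nhds (q ^ α * x)) := by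
  have h0 : Tendsto (fun k : ℕ => 1/((k:ℝ)+2)) atTop (nhds 0) := by
    simp_rw [one_div]
    exact tendsto_inv_atTop_zero.comp
      (tendsto_atTop_add_const_right atTop 2 tendsto_natCast_atTop_atTop)
  have h1 : Tendsto (fun k : ℕ => (1:ℝ) - 1/((k:ℝ)+2)) atTop (nhds 1) := by
    have := tendsto_const_nhds (x := (1:ℝ)) (f := atTop (α := ℕ)) |>.sub h0
    simpa using this
  have h2 : Tendsto (fun k : ℕ => q / (1 - 1/((k:ℝ)+2))) atTop (nhds q) := by
    have := Tendsto.div (tendsto_const_nhds (x := q) (f := atTop (α := ℕ))) h1 one_ne_zero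
    rw [div_one] at this
    exact this
  have h3 : Tendsto (fun k : ℕ => (q / (1 - 1/((k:ℝ)+2))) ^ α) atTop (nhds (q ^ α)) :=
    ((Real.continuousAt_rpow_const q α (Or.inl hq.ne')).tendsto).comp h2
  exact h3.mul_const x

lemma aux_eps_hi {q : ℝ} (hq : 0 < q) (α x : ℝ) :
    Tendsto (fun k : ℕ => (q / (1 + 1/((k:ℝ)+2))) ^ α * x) atTop (nhds (q ^ α * x)) := by
  have h0 : Tendsto (fun k : ℕ => 1/((k:ℝ)+2)) atTop (nhds 0) := by
    simp_rw [one_div]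
    exact tendsto_inv_atTop_zero.comp
      (tendsto_atTop_add_const_right atTop 2 tendsto_natCast_atTop_atTop)
  have h1 : Tendsto (fun k : ℕ => (1:ℝ) + 1/((k:ℝ)+2)) atTop (nhds 1) := by
    have := tendsto_const_nhds (x := (1:ℝ)) (f := atTop (α := ℕ)) |>.add h0
    simpa using this
  have h2 : Tendsto (fun k : ℕ => q / (1 + 1/((k:ℝ)+2))) atTop (nhds q) := by
    have := Tendsto.div (tendsto_const_nhds (x := q) (f := atTop (α := ℕ))) h1 one_ne_zero
    rw [div_one] at this
    exact this
  have h3 : Tendsto (fun k : ℕ => (q / (1 + 1/((k:ℝ)+2))) ^ α) atTop (nhds (q ^ α)) :=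
    ((Real.continuousAt_rpow_const q α (Or.inl hq.ne')).tendsto).comp h2
  exact h3.mul_const x

/-- If `ξ_j` are i.i.d. nonnegative, `S_m = ∑_{j<m} ξ_j`, `N_n` is an increasing sequence of
positive integer random variables with `N_n / n → q > 0` a.s., and `n^{-α} S_{N_n} → X` in
distribution, then `m^{-α} S_m → q^{-α} X` in distribution. -/
theorem stmt1 {Ω : Type*} [MeasurableSpace Ω] (μ : Measure Ω) [IsProbabilityMeasure μ]
    (ξ : ℕ → Ω → ℝ) (hξmeas : ∀ j, Measurable (ξ j)) (hξnonneg : ∀ j ω, 0 ≤ ξ j ω)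
    (hξindep : iIndepFun ξ μ)
    (hξid : ∀ j, Measure.map (ξ j) μ = Measure.map (ξ 0) μ)
    (N : ℕ → Ω → ℕ) (hNmeas : ∀ n, Measurable (N n))
    (hNmono : ∀ ω, StrictMono fun n => N n ω) (hNpos : ∀ n ω, 0 < N n ω)
    (q : ℝ) (hq : 0 < q)
    (hNlim : ∀ᵐ ω ∂μ, Tendsto (fun n : ℕ => (N n ω : ℝ) / n) atTop (nhds q))
    (α : ℝ) (hα : 0 < α) (X : Ω → ℝ) (hXmeas : Measurable X)
    (hconv : ∀ f : BoundedContinuousFunction ℝ ℝ,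
      Tendsto (fun n : ℕ =>
          ∫ ω, f ((n : ℝ) ^ (-α) * ∑ j ∈ Finset.range (N n ω), ξ j ω) ∂μ)
        atTop (nhds (∫ ω, f (X ω) ∂μ))) :
    ∀ f : BoundedContinuousFunction ℝ ℝ,
      Tendsto (fun m : ℕ =>
          ∫ ω, f ((m : ℝ) ^ (-α) * ∑ j ∈ Finset.range m, ξ j ω) ∂μ)
        atTop (nhds (∫ ω, f (q ^ (-α) * X ω) ∂μ)) := by
  classical
  -- basic definitions
  set S : ℕ → Ω → ℝ := fun m ω => ∑ j ∈ Finset.range m, ξ j ω with hSdef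
  set T : ℕ → Ω → ℝ := fun m ω => (m : ℝ) ^ (-α) * S m ω with hTdef
  set Z : ℕ → Ω → ℝ := fun n ω => (n : ℝ) ^ (-α) * S (N n ω) ω with hZdef
  have hSmeas : ∀ m, Measurable (S m) := fun m =>
    Finset.measurable_sum _ (fun j _ => hξmeas j)
  have hSNmeas : ∀ n, Measurable (fun ω => S (N n ω) ω) := by
    intro n
    have h1 : Measurable (fun p : Ω × ℕ => S p.2 p.1) :=
      measurable_from_prod_countable_left (fun k => hSmeas k)
    exact h1.comp (measurable_id.prodMk (hNmeas n))
  have hTmeas : ∀ m, Measurable (T m) := fun m => (hSmeas m).const_mul _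
  have hZmeas : ∀ n, Measurable (Z n) := fun n => (hSNmeas n).const_mul _
  have hqα : (0:ℝ) < q ^ α := Real.rpow_pos_of_pos hq α
  -- probability measures
  set PX : ProbabilityMeasure ℝ := ⟨μ.map X, Measure.isProbabilityMeasure_map hXmeas.aemeasurable⟩
  set PZ : ℕ → ProbabilityMeasure ℝ := fun n =>
    ⟨μ.map (Z n), Measure.isProbabilityMeasure_map (hZmeas n).aemeasurable⟩
  set PT : ℕ → ProbabilityMeasure ℝ := fun m =>
    ⟨μ.map (T m), Measure.isProbabilityMeasure_map (hTmeas m).aemeasurable⟩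
  set PG : ProbabilityMeasure ℝ := ⟨μ.map (fun ω => q ^ (-α) * X ω),
    Measure.isProbabilityMeasure_map ((hXmeas.const_mul _).aemeasurable)⟩
  -- hypothesis as weak convergence
  have hZX : Tendsto PZ atTop (nhds PX) := by
    rw [ProbabilityMeasure.tendsto_iff_forall_integral_tendsto]
    intro g
    have h1 : ∀ n, ∫ y, g y ∂(PZ n : Measure ℝ) = ∫ ω, g (Z n ω) ∂μ := fun n =>
      integral_map (hZmeas n).aemeasurable g.continuous.measurable.aestronglyMeasurable
    have h2 : ∫ y, g y ∂(PX : Measure ℝ) = ∫ ω, g (X ω) ∂μ :=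
      integral_map hXmeas.aemeasurable g.continuous.measurable.aestronglyMeasurable
    simp_rw [h1, h2]
    exact hconv g
  -- atoms
  set D : Set ℝ := {v | (μ.map X) {v} = 0} with hDdef
  have hDc : Dᶜ.Countable := by
    apply Set.Countable.mono _ (Measure.countable_meas_level_set_pos (μ := μ) (g := X) hXmeas)
    intro v hv
    simp only [hDdef, mem_compl_iff, mem_setOf_eq] at hv ⊢
    rw [Measure.map_apply hXmeas (measurableSet_singleton v)] at hv
    exact pos_iff_ne_zero.mpr hv
  -- cdf convergence for Z
  have cdfZ : ∀ v ∈ D, Tendsto (fun n => μ {ω | Z n ω ≤ v}) atTop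
      (nhds ((μ.map X) (Iic v))) := by
    intro v hv
    have hbdry : PX (frontier (Iic v)) = 0 := by
      rw [frontier_Iic]
      have : ((PX (({v} : Set ℝ)) : NNReal) : ENNReal) = ((μ.map X) {v}) :=
        PX.ennreal_coeFn_eq_coeFn_toMeasure {v}
      rw [hv] at this
      exact_mod_cast this
    have h1 := ProbabilityMeasure.tendsto_measure_of_null_frontier_of_tendsto hZX hbdry
    have h2 : Tendsto (fun n => ((PZ n (Iic v) : NNReal) : ENNReal)) atTop
        (nhds ((PX (Iic v) : NNReal) : ENNReal)) := ENNReal.tendsto_coe.mpr h1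
    simp_rw [ProbabilityMeasure.ennreal_coeFn_eq_coeFn_toMeasure] at h2
    have h3 : ∀ n, ((PZ n : Measure ℝ)) (Iic v) = μ {ω | Z n ω ≤ v} := fun n =>
      Measure.map_apply (hZmeas n) measurableSet_Iic
    have h4 : ((PX : Measure ℝ)) (Iic v) = (μ.map X) (Iic v) := rfl
    simp_rw [h3, h4] at h2
    exact h2
  -- core: pointwise cdf convergence for T
  have hpoint : ∀ x : ℝ, (q ^ α * x) ∈ D →
      Tendsto (fun m => μ {ω | T m ω ≤ x}) atTop (nhds ((μ.map X) (Iic (q ^ α * x)))) := by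
    intro x hx
    have hupper : ∀ v ∈ D, q ^ α * x < v →
        Filter.limsup (fun m => μ {ω | T m ω ≤ x}) atTop ≤ (μ.map X) (Iic v) := by
      intro v hv htv
      obtain ⟨k, hkv⟩ := ((aux_eps_lo hq α x).eventually_lt_const htv).exists
      set ε : ℝ := 1/((k:ℝ)+2) with hεdef
      have hε0 : 0 < ε := by positivity
      have hε1 : ε < 1 := by
        rw [hεdef]
        rw [div_lt_one (by positivity)]
        have : (0:ℝ) ≤ (k:ℝ) := Nat.cast_nonneg k
        linarith
      set c : ℝ := (1 - ε)/q with hcdef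
      have hc : 0 < c := div_pos (by linarith) hq
      obtain ⟨hratio, htop⟩ := aux_floor_ratio hc
      set ns : ℕ → ℕ := fun m => ⌊c * (m:ℝ)⌋₊ with hnsdef
      set B : ℕ → Set Ω := fun m => {ω | N (ns m) ω ≤ m} with hBdef
      have hBmeas : ∀ m, MeasurableSet (B m) := fun m =>
        (hNmeas (ns m)) measurableSet_Iic
      have haeB : ∀ᵐ ω ∂μ, ∀ᶠ m in atTop, ω ∈ B m := by
        filter_upwards [hNlim] with ω hω
        have h1 : Tendsto (fun m => (N (ns m) ω : ℝ) / (ns m)) atTop (nhds q) :=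
          hω.comp htop
        have h2 : Tendsto (fun m => (N (ns m) ω : ℝ) / m) atTop (nhds (1 - ε)) := by
          have h3 := h1.mul hratio
          rw [show q * c = 1 - ε by rw [hcdef]; field_simp] at h3
          apply h3.congr'
          filter_upwards [htop.eventually_ge_atTop 1] with m hm
          have hne : ((ns m : ℕ) : ℝ) ≠ 0 := Nat.cast_ne_zero.mpr (by omega)
          field_simp
          rfl
        have h4 : ∀ᶠ m in atTop, (N (ns m) ω : ℝ)/m < 1 :=
          h2.eventually_lt_const (by linarith)
        filter_upwards [h4, eventually_ge_atTop 1] with m hm hm1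
        have hmpos : (0:ℝ) < m := by exact_mod_cast Nat.pos_of_ne_zero (by omega)
        have := (div_lt_one hmpos).mp hm
        have : N (ns m) ω < m := by exact_mod_cast this
        exact this.le
      have hB := aux_measure_compl_tendsto_zero μ hBmeas haeB
      set E : ℕ → Set Ω := fun m => {ω | Z (ns m) ω ≤ v} with hEdef
      have hEtend : Tendsto (fun m => μ (E m)) atTop (nhds ((μ.map X) (Iic v))) :=
        (cdfZ v hv).comp htop
      set y : ℕ → ℝ := fun m => ((m:ℝ) / (ns m)) ^ α * x with hydef
      have hy : Tendsto y atTop (nhds ((q/(1-ε)) ^ α * x)) := by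
        have h5 : Tendsto (fun m => (((ns m : ℕ):ℝ)/(m:ℝ))⁻¹) atTop (nhds c⁻¹) :=
          hratio.inv₀ hc.ne'
        have h6 : c⁻¹ = q/(1-ε) := by rw [hcdef, inv_div]
        simp_rw [inv_div, h6] at h5
        exact (((Real.continuousAt_rpow_const (q/(1-ε)) α
          (Or.inl (div_pos hq (by linarith)).ne')).tendsto).comp h5).mul_const x
      have hyv : ∀ᶠ m in atTop, y m ≤ v := by
        have : (q/(1-ε)) ^ α * x < v := hkv
        filter_upwards [hy.eventually_lt_const this] with m hm
        exact hm.le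
      have hincl : ∀ᶠ m in atTop, {ω | T m ω ≤ x} ⊆ E m ∪ (B m)ᶜ := by
        filter_upwards [eventually_ge_atTop 1, htop.eventually_ge_atTop 1, hyv]
          with m hm1 hn1 hyvm
        intro ω hω
        by_cases hωB : ω ∈ B m
        · left
          have hmpos : (0:ℝ) < m := by exact_mod_cast Nat.pos_of_ne_zero (by omega)
          have hnpos : (0:ℝ) < ns m := by exact_mod_cast Nat.pos_of_ne_zero (by omega)
          have hSle : S (N (ns m) ω) ω ≤ S m ω :=
            Finset.sum_le_sum_of_subset_of_nonneg (Finset.range_subset_range.mpr hωB)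
              (fun j _ _ => hξnonneg j ω)
          have hZle : Z (ns m) ω ≤ ((ns m : ℕ):ℝ) ^ (-α) * S m ω :=
            mul_le_mul_of_nonneg_left hSle (Real.rpow_nonneg hnpos.le _)
          have heq : ((ns m : ℕ):ℝ) ^ (-α) * S m ω = ((m:ℝ)/(ns m)) ^ α * T m ω :=
            aux_scale hmpos hnpos α (S m ω)
          have hfin : Z (ns m) ω ≤ y m := by
            rw [heq] at hZle
            refine hZle.trans ?_
            exact mul_le_mul_of_nonneg_left hω (Real.rpow_nonneg (by positivity) _)
          exact hfin.trans hyvm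
        · right
          exact hωB
      exact aux_limsup_le hincl hB hEtend
    have hlower : ∀ u ∈ D, u < q ^ α * x →
        (μ.map X) (Iic u) ≤ Filter.liminf (fun m => μ {ω | T m ω ≤ x}) atTop := by
      intro u hu hut
      obtain ⟨k, hku⟩ := ((aux_eps_hi hq α x).eventually_const_lt hut).exists
      set ε : ℝ := 1/((k:ℝ)+2) with hεdef
      have hε0 : 0 < ε := by positivity
      set c : ℝ := (1 + ε)/q with hcdef
      have hc : 0 < c := div_pos (by linarith) hq
      obtain ⟨hratio, htop⟩ := aux_floor_ratio hc
      set ns : ℕ → ℕ := fun m => ⌊c * (m:ℝ)⌋₊ with hnsdef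
      set C : ℕ → Set Ω := fun m => {ω | m ≤ N (ns m) ω} with hCdef
      have hCmeas : ∀ m, MeasurableSet (C m) := fun m =>
        (hNmeas (ns m)) measurableSet_Ici
      have haeC : ∀ᵐ ω ∂μ, ∀ᶠ m in atTop, ω ∈ C m := by
        filter_upwards [hNlim] with ω hω
        have h1 : Tendsto (fun m => (N (ns m) ω : ℝ) / (ns m)) atTop (nhds q) :=
          hω.comp htop
        have h2 : Tendsto (fun m => (N (ns m) ω : ℝ) / m) atTop (nhds (1 + ε)) := by
          have h3 := h1.mul hratio
          rw [show q * c = 1 + ε by rw [hcdef]; field_simp] at h3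
          apply h3.congr'
          filter_upwards [htop.eventually_ge_atTop 1] with m hm
          have hne : ((ns m : ℕ) : ℝ) ≠ 0 := Nat.cast_ne_zero.mpr (by omega)
          field_simp
          rfl
        have h4 : ∀ᶠ m in atTop, 1 < (N (ns m) ω : ℝ)/m :=
          h2.eventually_const_lt (by linarith)
        filter_upwards [h4, eventually_ge_atTop 1] with m hm hm1
        have hmpos : (0:ℝ) < m := by exact_mod_cast Nat.pos_of_ne_zero (by omega)
        have := (one_lt_div hmpos).mp hm
        have : m < N (ns m) ω := by exact_mod_cast this
        exact this.le
      have hC := aux_measure_compl_tendsto_zero μ hCmeas haeC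
      set E : ℕ → Set Ω := fun m => {ω | Z (ns m) ω ≤ u} with hEdef
      have hEtend : Tendsto (fun m => μ (E m)) atTop (nhds ((μ.map X) (Iic u))) :=
        (cdfZ u hu).comp htop
      set y : ℕ → ℝ := fun m => ((m:ℝ) / (ns m)) ^ α * x with hydef
      have hy : Tendsto y atTop (nhds ((q/(1+ε)) ^ α * x)) := by
        have h5 : Tendsto (fun m => (((ns m : ℕ):ℝ)/(m:ℝ))⁻¹) atTop (nhds c⁻¹) :=
          hratio.inv₀ hc.ne'
        have h6 : c⁻¹ = q/(1+ε) := by rw [hcdef, inv_div]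
        simp_rw [inv_div, h6] at h5
        exact (((Real.continuousAt_rpow_const (q/(1+ε)) α
          (Or.inl (div_pos hq (by linarith)).ne')).tendsto).comp h5).mul_const x
      have huy : ∀ᶠ m in atTop, u ≤ y m := by
        have : u < (q/(1+ε)) ^ α * x := hku
        filter_upwards [hy.eventually_const_lt this] with m hm
        exact hm.le
      have hincl : ∀ᶠ m in atTop, E m ⊆ {ω | T m ω ≤ x} ∪ (C m)ᶜ := by
        filter_upwards [eventually_ge_atTop 1, htop.eventually_ge_atTop 1, huy]
          with m hm1 hn1 huym
        intro ω hω
        by_cases hωC : ω ∈ C m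
        · left
          have hmpos : (0:ℝ) < m := by exact_mod_cast Nat.pos_of_ne_zero (by omega)
          have hnpos : (0:ℝ) < ns m := by exact_mod_cast Nat.pos_of_ne_zero (by omega)
          have hSle : S m ω ≤ S (N (ns m) ω) ω :=
            Finset.sum_le_sum_of_subset_of_nonneg (Finset.range_subset_range.mpr hωC)
              (fun j _ _ => hξnonneg j ω)
          have hTle : T m ω ≤ (m:ℝ) ^ (-α) * S (N (ns m) ω) ω :=
            mul_le_mul_of_nonneg_left hSle (Real.rpow_nonneg hmpos.le _)
          have heq : (m:ℝ) ^ (-α) * S (N (ns m) ω) ω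
              = (((ns m : ℕ):ℝ)/(m:ℝ)) ^ α * Z (ns m) ω :=
            aux_scale hnpos hmpos α (S (N (ns m) ω) ω)
          have hfin : T m ω ≤ (((ns m : ℕ):ℝ)/(m:ℝ)) ^ α * y m := by
            rw [heq] at hTle
            refine hTle.trans ?_
            exact mul_le_mul_of_nonneg_left (le_trans hω huym)
              (Real.rpow_nonneg (by positivity) _)
          have hone : (((ns m : ℕ):ℝ)/(m:ℝ)) ^ α * y m = x := by
            rw [hydef]
            dsimp only
            rw [← mul_assoc, ← Real.mul_rpow (by positivity) (by positivity)]
            rw [div_mul_div_comm]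
            rw [show ((ns m : ℕ):ℝ) * (m:ℝ) / ((m:ℝ) * ((ns m : ℕ):ℝ)) = 1 by
              rw [mul_comm ((ns m : ℕ):ℝ) (m:ℝ)]
              exact div_self (by positivity)]
            rw [Real.one_rpow, one_mul]
          exact le_of_le_of_eq hfin hone
        · right
          exact hωC
      exact aux_liminf_ge hincl hC hEtend
    have hliminf : (μ.map X) (Iic (q ^ α * x)) ≤
        Filter.liminf (fun m => μ {ω | T m ω ≤ x}) atTop := by
      apply ENNReal.le_of_forall_pos_le_add
      intro δ hδ _
      obtain ⟨u, huD, hut, hub⟩ := aux_below (ν := μ.map X) hDc (q ^ α * x) hx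
        (δ := (δ : ENNReal)) (by exact_mod_cast hδ.ne')
      exact hub.trans (add_le_add_left (hlower u huD hut) _)
    have hlimsup : Filter.limsup (fun m => μ {ω | T m ω ≤ x}) atTop ≤
        (μ.map X) (Iic (q ^ α * x)) := by
      apply ENNReal.le_of_forall_pos_le_add
      intro δ hδ _
      obtain ⟨v, hvD, htv, hvb⟩ := aux_above (ν := μ.map X) hDc (q ^ α * x)
        (δ := (δ : ENNReal)) (by exact_mod_cast hδ.ne')
      exact (hupper v hvD htv).trans hvb
    exact tendsto_of_le_liminf_of_limsup_le hliminf hlimsup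
  -- final assembly
  intro f
  set D' : Set ℝ := {x | q ^ α * x ∈ D} with hD'def
  have hD'c : D'ᶜ.Countable := by
    have hset : D'ᶜ = (fun x : ℝ => q ^ α * x) ⁻¹' Dᶜ := rfl
    rw [hset]
    exact hDc.preimage (mul_right_injective₀ hqα.ne')
  have hweak : Tendsto PT atTop (nhds PG) := by
    apply aux_weak_of_cdf hD'c
    intro x hxD'
    have h1 : (PG : Measure ℝ) (Iic x) = (μ.map X) (Iic (q ^ α * x)) := by
      show (μ.map (fun ω => q ^ (-α) * X ω)) (Iic x) = _
      rw [Measure.map_apply (hXmeas.const_mul _) measurableSet_Iic,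
        Measure.map_apply hXmeas measurableSet_Iic]
      congr 1
      ext ω
      simp only [mem_preimage, mem_Iic]
      rw [Real.rpow_neg hq.le]
      exact inv_mul_le_iff₀ hqα
    have h2 : ∀ m, (PT m : Measure ℝ) (Iic x) = μ {ω | T m ω ≤ x} := fun m =>
      Measure.map_apply (hTmeas m) measurableSet_Iic
    simp_rw [h2, h1]
    exact hpoint x hxD'
  have hfinal := ProbabilityMeasure.tendsto_iff_forall_integral_tendsto.mp hweak f
  have h3 : ∀ m, ∫ y, f y ∂(PT m : Measure ℝ) = ∫ ω, f (T m ω) ∂μ := fun m =>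
    integral_map (hTmeas m).aemeasurable f.continuous.measurable.aestronglyMeasurable
  have h4 : ∫ y, f y ∂(PG : Measure ℝ) = ∫ ω, f (q ^ (-α) * X ω) ∂μ :=
    integral_map ((hXmeas.const_mul _)).aemeasurable
      f.continuous.measurable.aestronglyMeasurable
  simp_rw [h3, h4] at hfinal
  exact hfinal
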